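/- For all nonnegative integers h and k, the q-Delannoy numbers satisfy the recurrence D_q(h+1, k+1) = D_q(h+1, k) + q^{k+1} D_q(h, k+1) + q^{k+1} D_q(h, k), as an identity in ℤ[q]. -/
import Mathlib


open Polynomial Finset

/-- The Gaussian (q-)binomial coefficient `[h choose k]_q` as a polynomial in `ℤ[q]`,
defined via the q-Pascal recurrence; it equals
`([h]_q [h−1]_q ⋯ [h−k+1]_q)/([k]_q ⋯ [1]_q)`. -/
noncomputable def qBinom : ℕ → ℕ → Polynomial ℤ
  | _, 0 => 1
  | 0, _ + 1 => 0
  | h + 1, k + 1 => qBinom h k + Polynomial.X ^ (k + 1) * qBinom h (k + 1)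

/-- The q-Delannoy number `D_q(h,k) = Σ_{j=0}^{h} q^{binom(j+1,2)} [k choose j]_q
[h+k−j choose k]_q`. -/
noncomputable def qDelannoy (h k : ℕ) : Polynomial ℤ :=
  ∑ j ∈ Finset.range (h + 1),
    Polynomial.X ^ ((j + 1).choose 2) * qBinom k j * qBinom (h + k - j) k

/-- The Delannoy number `D(h,k) = Σ_{j=0}^{h} binom(k,j) binom(h+k−j,k)`. -/
def delannoy (h k : ℕ) : ℕ :=
  ∑ j ∈ Finset.range (h + 1), k.choose j * (h + k - j).choose k

lemma qBinom_zero_right (n : ℕ) : qBinom n 0 = 1 := by cases n <;> rfl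

lemma qBinom_eq_zero : ∀ n k : ℕ, n < k → qBinom n k = 0
  | 0, k+1, _ => rfl
  | n+1, k+1, h => by
    rw [qBinom, qBinom_eq_zero n k (by omega), qBinom_eq_zero n (k+1) (by omega)]
    ring

lemma qBinom_geom (m : ℕ) : X * qBinom m 1 + 1 = X ^ m + qBinom m 1 := by
  induction m with
  | zero => simp [qBinom]
  | succ m ih =>
    rw [show qBinom (m+1) 1 = qBinom m 0 + X^1 * qBinom m 1 from rfl, qBinom_zero_right]
    linear_combination X * ih

lemma qBinom_pascal2 : ∀ n j : ℕ, qBinom (n+1) (j+1) = X ^ (n - j) * qBinom n j + qBinom n (j+1) := by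
  intro n
  induction n with
  | zero =>
    intro j
    match j with
    | 0 => simp [qBinom]
    | j+1 =>
      rw [qBinom_eq_zero 1 (j+2) (by omega), qBinom_eq_zero 0 (j+1) (by omega),
        qBinom_eq_zero 0 (j+2) (by omega)]
      ring
  | succ n ih =>
    intro j
    match j with
    | 0 =>
      have hd : qBinom (n+2) 1 = qBinom (n+1) 0 + X^1 * qBinom (n+1) 1 := rfl
      simp only [hd, qBinom_zero_right, Nat.sub_zero, pow_one, mul_one, Nat.zero_add]
      linear_combination qBinom_geom (n+1)
    | i+1 =>
      by_cases hik : i < n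
      · have H1 := ih i
        have H2 := ih (i+1)
        rw [show n - (i+1) = n - i - 1 from by omega] at H2
        have C : qBinom (n+1) (i+1) = qBinom n i + X^(i+1) * qBinom n (i+1) := rfl
        have D : qBinom (n+1) (i+2) = qBinom n (i+1) + X^(i+2) * qBinom n (i+2) := rfl
        have hd : qBinom (n+2) (i+2) = qBinom (n+1) (i+1) + X^(i+2) * qBinom (n+1) (i+2) := rfl
        rw [hd, show n + 1 - (i+1) = n - i from by omega]
        have e1 : X^(i+2) * (X:Polynomial ℤ)^(n-i-1) = X^(n+1) := by
          rw [← pow_add]; congr 1; omega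
        have e2 : (X:Polynomial ℤ)^(n-i) * X^(i+1) = X^(n+1) := by
          rw [← pow_add]; congr 1; omega
        linear_combination H1 + X^(i+2) * H2 - X^(n-i) * C - D
          + qBinom n (i+1) * e1 - qBinom n (i+1) * e2
      · have hd : qBinom (n+2) (i+2) = qBinom (n+1) (i+1) + X^(i+2) * qBinom (n+1) (i+2) := rfl
        rw [hd, qBinom_eq_zero (n+1) (i+2) (by omega),
          show n + 1 - (i+1) = 0 from by omega]
        ring

theorem qDelannoy_recurrence (h k : ℕ) :
    qDelannoy (h + 1) (k + 1) =
      qDelannoy (h + 1) k + Polynomial.X ^ (k + 1) * qDelannoy h (k + 1) +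
        Polynomial.X ^ (k + 1) * qDelannoy h k := by
  unfold qDelannoy
  have step1 :
      ∑ j ∈ Finset.range (h+1+1),
        X ^ ((j+1).choose 2) * qBinom (k+1) j * qBinom (h+1+(k+1)-j) (k+1)
      = ∑ j ∈ Finset.range (h+1+1),
        X ^ ((j+1).choose 2) * qBinom (k+1) j * qBinom (h+k+1-j) k
        + X^(k+1) * ∑ j ∈ Finset.range (h+1+1),
          X ^ ((j+1).choose 2) * qBinom (k+1) j * qBinom (h+k+1-j) (k+1) := by
    rw [Finset.mul_sum, ← Finset.sum_add_distrib]
    refine Finset.sum_congr rfl fun j hj => ?_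
    simp only [Finset.mem_range] at hj
    rw [show h+1+(k+1)-j = (h+k+1-j)+1 from by omega, qBinom]
    ring
  have step2 :
      ∑ j ∈ Finset.range (h+1+1),
        X ^ ((j+1).choose 2) * qBinom (k+1) j * qBinom (h+k+1-j) (k+1)
      = ∑ j ∈ Finset.range (h+1),
        X ^ ((j+1).choose 2) * qBinom (k+1) j * qBinom (h+(k+1)-j) (k+1) := by
    rw [Finset.sum_range_succ, show h+k+1-(h+1) = k from by omega,
      qBinom_eq_zero k (k+1) (by omega), mul_zero, add_zero]
    refine Finset.sum_congr rfl fun j hj => ?_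
    simp only [Finset.mem_range] at hj
    rw [show h+(k+1)-j = h+k+1-j from by omega]
  have step3 :
      ∑ j ∈ Finset.range (h+1+1),
        X ^ ((j+1).choose 2) * qBinom (k+1) j * qBinom (h+k+1-j) k
      = ∑ j ∈ Finset.range (h+1+1),
        X ^ ((j+1).choose 2) * qBinom k j * qBinom (h+1+k-j) k
        + X^(k+1) * ∑ j ∈ Finset.range (h+1),
          X ^ ((j+1).choose 2) * qBinom k j * qBinom (h+k-j) k := by
    rw [Finset.sum_range_succ' _ (h+1), Finset.sum_range_succ' _ (h+1), Finset.mul_sum]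
    have hzero :
        X ^ ((0+1).choose 2) * qBinom (k+1) 0 * qBinom (h+k+1-0) k
        = X ^ ((0+1).choose 2) * qBinom k 0 * qBinom (h+1+k-0) k := by
      rw [qBinom_zero_right, qBinom_zero_right, show h+k+1-0 = h+1+k-0 from by omega]
    have hsum :
        ∑ i ∈ Finset.range (h+1),
          X ^ ((i+1+1).choose 2) * qBinom (k+1) (i+1) * qBinom (h+k+1-(i+1)) k
        = ∑ i ∈ Finset.range (h+1),
          (X ^ ((i+1+1).choose 2) * qBinom k (i+1) * qBinom (h+1+k-(i+1)) k
            + X^(k+1) * (X ^ ((i+1).choose 2) * qBinom k i * qBinom (h+k-i) k)) := by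
      refine Finset.sum_congr rfl fun i hi => ?_
      simp only [Finset.mem_range] at hi
      rw [show h+k+1-(i+1) = h+k-i from by omega,
        show h+1+k-(i+1) = h+k-i from by omega,
        qBinom_pascal2 k i]
      by_cases hik : i ≤ k
      · have e : (X:Polynomial ℤ)^((i+1+1).choose 2) * X^(k-i)
            = X^(k+1) * X^((i+1).choose 2) := by
          rw [← pow_add, ← pow_add]
          congr 1
          have h2 : (i+1+1).choose 2 = (i+1).choose 1 + (i+1).choose 2 := by
            simpa using Nat.choose_succ_succ (i+1) 1
          rw [Nat.choose_one_right] at h2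
          omega
        linear_combination (qBinom k i * qBinom (h+k-i) k) * e
      · rw [qBinom_eq_zero k i (by omega)]
        ring
    rw [hzero, hsum, Finset.sum_add_distrib]
    ring
  rw [step1, step2, step3]
  ring
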